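/- Let d ≥ 8 and define g_0(h) = √(2d/(d+1) − h²) and g(h) = (2 − h²)/√(4 − h²) for real h. Then the function h ↦ g_0(h)/g(h) is strictly decreasing on the interval [√(2(d−2)/(d−1)), √(2(d−1)/d)), and its value at the left endpoint satisfies g_0(√(2(d−2)/(d−1)))/g(√(2(d−2)/(d−1))) = √(2d/(d+1)) < √2. In particular, g(h) < g_0(h) for all h in [√(2(d−2)/(d−1)), √(2(d−1)/d)). -/
import Mathlib


open MeasureTheory Metric

noncomputable section

/-- The radius `g₀(h) = √(2d/(d+1) - h²)` of the disc `G₀`. -/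
def gZero (d : ℕ) (h : ℝ) : ℝ := Real.sqrt (2 * d / (d + 1) - h ^ 2)

/-- The radius `g(h) = (2 - h²)/√(4 - h²)` of the disc `G`. -/
def gSmall (h : ℝ) : ℝ := (2 - h ^ 2) / Real.sqrt (4 - h ^ 2)

/-- The squared ratio `t ↦ (2D/(D+1) - t)(4 - t)/(2 - t)²` is strictly decreasing on
`[2(D-2)/(D-1), 2(D-1)/D)` for `D ≥ 8`. -/
lemma Fmono {D t₁ t₂ : ℝ} (hD : 8 ≤ D) (h0 : 2 * (D - 2) / (D - 1) ≤ t₁) (h12 : t₁ < t₂)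
    (hb : t₂ < 2 * (D - 1) / D) :
    (2 * D / (D + 1) - t₂) * (4 - t₂) / (2 - t₂) ^ 2 <
      (2 * D / (D + 1) - t₁) * (4 - t₁) / (2 - t₁) ^ 2 := by
  have hDpos : (0 : ℝ) < D := by linarith
  have hD1 : (0 : ℝ) < D - 1 := by linarith
  have hD1' : (0 : ℝ) < D + 1 := by linarith
  set c : ℝ := 2 / (D + 1) with hc
  have hcpos : 0 < c := by positivity
  have hA : 2 * D / (D + 1) = 2 - c := by
    rw [hc]; field_simp; ring
  -- bounds on t₁, t₂
  have ht1pos : 0 < t₁ := lt_of_lt_of_le (div_pos (by linarith) hD1) h0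
  have ht1 : 2 * (D - 2) ≤ t₁ * (D - 1) := (div_le_iff₀ hD1).mp h0
  have ht2 : t₂ * D < 2 * (D - 1) := by
    have := (lt_div_iff₀ hDpos).mp hb; linarith
  have hu2 : 0 < 2 - t₂ := by nlinarith
  have hu1 : 0 < 2 - t₁ := by linarith
  have hDu1 : D * (2 - t₁) < 4 := by nlinarith
  have hcu : (2 - c) * (2 - t₁) < 4 * c := by
    have e1 : (2 - c) * (2 - t₁) = c * (D * (2 - t₁)) := by
      rw [hc]; field_simp; ring
    have e2 : 4 * c = c * 4 := by ring
    rw [e1, e2]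
    exact mul_lt_mul_of_pos_left hDu1 hcpos
  have hbr : (2 - c) * ((2 - t₁) * (2 - t₂)) < 2 * c * ((2 - t₁) + (2 - t₂)) := by
    nlinarith [mul_lt_mul_of_pos_right hcu hu2, mul_pos hcpos (show (0:ℝ) < t₂ - t₁ by linarith)]
  have hint : 0 < ((2 - t₁) - (2 - t₂)) *
      (2 * c * ((2 - t₁) + (2 - t₂)) - (2 - c) * ((2 - t₁) * (2 - t₂))) :=
    mul_pos (by linarith) (by linarith)
  rw [hA, div_lt_div_iff₀ (by positivity) (by positivity)]
  have e : (2 - c - t₁) * (4 - t₁) * (2 - t₂) ^ 2 -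
      (2 - c - t₂) * (4 - t₂) * (2 - t₁) ^ 2 =
      ((2 - t₁) - (2 - t₂)) *
        (2 * c * ((2 - t₁) + (2 - t₂)) - (2 - c) * ((2 - t₁) * (2 - t₂))) := by ring
  linarith [e ▸ hint]

/-- For `d ≥ 8`, the function `h ↦ g₀(h)/g(h)` is strictly decreasing on
`[√(2(d-2)/(d-1)), √(2(d-1)/d))`, its value at the left endpoint is
`√(2d/(d+1)) < √2`, and in particular `g(h) < g₀(h)` on this interval. -/
theorem gZero_div_gSmall_strictAntiOn (d : ℕ) (hd : 8 ≤ d) :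
    StrictAntiOn (fun h : ℝ => gZero d h / gSmall h)
      (Set.Ico (Real.sqrt (2 * ((d : ℝ) - 2) / ((d : ℝ) - 1)))
        (Real.sqrt (2 * ((d : ℝ) - 1) / (d : ℝ)))) ∧
      gZero d (Real.sqrt (2 * ((d : ℝ) - 2) / ((d : ℝ) - 1))) /
          gSmall (Real.sqrt (2 * ((d : ℝ) - 2) / ((d : ℝ) - 1))) =
        Real.sqrt (2 * d / (d + 1)) ∧
      Real.sqrt (2 * d / (d + 1)) < Real.sqrt 2 ∧
      ∀ h ∈ Set.Ico (Real.sqrt (2 * ((d : ℝ) - 2) / ((d : ℝ) - 1)))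
          (Real.sqrt (2 * ((d : ℝ) - 1) / (d : ℝ))),
        gSmall h < gZero d h := by
  have hD : (8 : ℝ) ≤ (d : ℝ) := by exact_mod_cast hd
  have hDpos : (0 : ℝ) < (d : ℝ) := by linarith
  have hD1 : (0 : ℝ) < (d : ℝ) - 1 := by linarith
  have hD1' : (0 : ℝ) < (d : ℝ) + 1 := by linarith
  have ht0 : (0 : ℝ) ≤ 2 * ((d : ℝ) - 2) / ((d : ℝ) - 1) := div_nonneg (by linarith) hD1.le
  have htb : (0 : ℝ) ≤ 2 * ((d : ℝ) - 1) / (d : ℝ) := by positivity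
  have htbA : 2 * ((d : ℝ) - 1) / (d : ℝ) < 2 * (d : ℝ) / ((d : ℝ) + 1) := by
    rw [div_lt_div_iff₀ hDpos hD1']; nlinarith
  have htb2 : 2 * ((d : ℝ) - 1) / (d : ℝ) < 2 := by
    rw [div_lt_iff₀ hDpos]; linarith
  have ht0b : 2 * ((d : ℝ) - 2) / ((d : ℝ) - 1) < 2 * ((d : ℝ) - 1) / (d : ℝ) := by
    rw [div_lt_div_iff₀ hD1 hDpos]; nlinarith
  -- basic facts about points of the interval
  have bounds : ∀ h ∈ Set.Ico (Real.sqrt (2 * ((d : ℝ) - 2) / ((d : ℝ) - 1)))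
      (Real.sqrt (2 * ((d : ℝ) - 1) / (d : ℝ))),
      0 ≤ h ∧ 2 * ((d : ℝ) - 2) / ((d : ℝ) - 1) ≤ h ^ 2 ∧ h ^ 2 < 2 * ((d : ℝ) - 1) / (d : ℝ) := by
    intro h hm
    have hnn : 0 ≤ h := le_trans (Real.sqrt_nonneg _) hm.1
    refine ⟨hnn, ?_, ?_⟩
    · calc 2 * ((d : ℝ) - 2) / ((d : ℝ) - 1)
          = Real.sqrt (2 * ((d : ℝ) - 2) / ((d : ℝ) - 1)) ^ 2 := (Real.sq_sqrt ht0).symm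
        _ ≤ h ^ 2 := pow_le_pow_left₀ (Real.sqrt_nonneg _) hm.1 2
    · calc h ^ 2 < Real.sqrt (2 * ((d : ℝ) - 1) / (d : ℝ)) ^ 2 :=
          pow_lt_pow_left₀ hm.2 hnn (by norm_num)
        _ = 2 * ((d : ℝ) - 1) / (d : ℝ) := Real.sq_sqrt htb
  -- positivity and the squared value of the ratio
  have vals : ∀ h ∈ Set.Ico (Real.sqrt (2 * ((d : ℝ) - 2) / ((d : ℝ) - 1)))
      (Real.sqrt (2 * ((d : ℝ) - 1) / (d : ℝ))),
      0 < gZero d h ∧ 0 < gSmall h ∧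
        (gZero d h / gSmall h) ^ 2 =
          (2 * (d : ℝ) / ((d : ℝ) + 1) - h ^ 2) * (4 - h ^ 2) / (2 - h ^ 2) ^ 2 := by
    intro h hm
    obtain ⟨hnn, h1, h2⟩ := bounds h hm
    have hlt2 : h ^ 2 < 2 := lt_trans h2 htb2
    have hltA : h ^ 2 < 2 * (d : ℝ) / ((d : ℝ) + 1) := lt_trans h2 htbA
    have h4 : 0 < 4 - h ^ 2 := by linarith
    have hz : 0 < gZero d h := Real.sqrt_pos.mpr (by linarith)
    have hs : 0 < gSmall h := div_pos (by linarith) (Real.sqrt_pos.mpr h4)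
    refine ⟨hz, hs, ?_⟩
    rw [gZero, gSmall, div_pow, div_pow, Real.sq_sqrt (by linarith), Real.sq_sqrt h4.le,
      div_div_eq_mul_div]
  constructor
  · -- strict antitonicity
    intro h₁ hm₁ h₂ hm₂ h12
    obtain ⟨hz₁, hs₁, hv₁⟩ := vals h₁ hm₁
    obtain ⟨hz₂, hs₂, hv₂⟩ := vals h₂ hm₂
    obtain ⟨hnn₁, ha₁, hb₁⟩ := bounds h₁ hm₁
    obtain ⟨hnn₂, ha₂, hb₂⟩ := bounds h₂ hm₂
    have hsq : h₁ ^ 2 < h₂ ^ 2 := pow_lt_pow_left₀ h12 hnn₁ (by norm_num)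
    have hF := Fmono hD ha₁ hsq hb₂
    have : (gZero d h₂ / gSmall h₂) ^ 2 < (gZero d h₁ / gSmall h₁) ^ 2 := by
      rw [hv₁, hv₂]; exact hF
    exact lt_of_pow_lt_pow_left₀ 2 (div_pos hz₁ hs₁).le this
  refine ⟨?_, ?_, ?_⟩
  · -- value at the left endpoint
    set h₀ : ℝ := Real.sqrt (2 * ((d : ℝ) - 2) / ((d : ℝ) - 1)) with hh₀
    have hmem : h₀ ∈ Set.Ico (Real.sqrt (2 * ((d : ℝ) - 2) / ((d : ℝ) - 1)))
        (Real.sqrt (2 * ((d : ℝ) - 1) / (d : ℝ))) :=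
      ⟨le_refl _, Real.sqrt_lt_sqrt ht0 ht0b⟩
    obtain ⟨hz, hs, hv⟩ := vals h₀ hmem
    have hsq : h₀ ^ 2 = 2 * ((d : ℝ) - 2) / ((d : ℝ) - 1) := Real.sq_sqrt ht0
    have e2 : 2 - 2 * ((d : ℝ) - 2) / ((d : ℝ) - 1) = 2 / ((d : ℝ) - 1) := by
      field_simp; ring
    have e4 : 4 - 2 * ((d : ℝ) - 2) / ((d : ℝ) - 1) = 2 * (d : ℝ) / ((d : ℝ) - 1) := by
      field_simp; ring
    have eA : 2 * (d : ℝ) / ((d : ℝ) + 1) - 2 * ((d : ℝ) - 2) / ((d : ℝ) - 1) =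
        4 / (((d : ℝ) + 1) * ((d : ℝ) - 1)) := by
      field_simp; ring
    have hval : (gZero d h₀ / gSmall h₀) ^ 2 = 2 * (d : ℝ) / ((d : ℝ) + 1) := by
      rw [hv, hsq, e2, e4, eA, div_pow]
      field_simp
      ring
    have hr : 0 ≤ gZero d h₀ / gSmall h₀ := (div_pos hz hs).le
    rw [← Real.sqrt_sq hr, hval]
  · -- √(2d/(d+1)) < √2
    apply Real.sqrt_lt_sqrt (by positivity)
    rw [div_lt_iff₀ hD1']; linarith
  · -- g < g₀ on the interval
    intro h hm
    obtain ⟨hz, hs, _⟩ := vals h hm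
    obtain ⟨hnn, h1, h2⟩ := bounds h hm
    have hlt2 : h ^ 2 < 2 := lt_trans h2 htb2
    have hltA : h ^ 2 < 2 * (d : ℝ) / ((d : ℝ) + 1) := lt_trans h2 htbA
    have h4 : 0 < 4 - h ^ 2 := by linarith
    have ht2 : h ^ 2 * (d : ℝ) < 2 * ((d : ℝ) - 1) := by
      have := (lt_div_iff₀ hDpos).mp h2; linarith
    have key4 : 4 < 2 * (d : ℝ) / ((d : ℝ) + 1) * (4 - h ^ 2) := by
      rw [div_mul_eq_mul_div, lt_div_iff₀ hD1']; nlinarith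
    have hsq : gSmall h ^ 2 < gZero d h ^ 2 := by
      rw [gZero, gSmall, div_pow,
        Real.sq_sqrt (show (0:ℝ) ≤ 2 * (d : ℝ) / ((d : ℝ) + 1) - h ^ 2 by linarith),
        Real.sq_sqrt h4.le, div_lt_iff₀ h4]
      nlinarith
    exact lt_of_pow_lt_pow_left₀ 2 (Real.sqrt_nonneg _) hsq
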